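/- arXiv:1511.02746 — 3 statements merged into one kernel-verified Lean document; each statement's English description precedes it below -/
import Mathlib

section
/- In Powell's example, the per-block minimizer formula holds: for f(x) = -x₁x₂ - x₂x₃ - x₃x₁ + Σᵢ[(xᵢ-1)₊² + (-xᵢ-1)₊²], fixing (x₂,x₃) with x₂ + x₃ > 0, the unique minimizer over x₁ ∈ ℝ is x₁ = 1 + (1/2)(x₂ + x₃); and if x₂ + x₃ = 0, every point of [-1,1] is a minimizer in x₁. -/
/-- Facts about m = max 0 (y-1). -/
lemma max_facts (a : ℝ) : 0 ≤ max 0 a ∧ a ≤ max 0 a ∧ max 0 a * (max 0 a - a) = 0 := by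
  rcases le_total a 0 with h | h
  · rw [max_eq_left h]; exact ⟨le_refl _, h, by ring⟩
  · rw [max_eq_right h]; exact ⟨h, le_refl _, by ring⟩

set_option maxHeartbeats 1000000 in
/-- Powell's example, per-block minimizer formula: with x₂, x₃ fixed, if x₂+x₃ > 0
the unique minimizer of f over x₁ is 1 + (x₂+x₃)/2; if x₂+x₃ = 0 every point of
[-1,1] is a minimizer in x₁. -/
theorem stmt_12
    (f : ℝ → ℝ → ℝ → ℝ)
    (hf : ∀ x₁ x₂ x₃ : ℝ, f x₁ x₂ x₃ =
      -(x₁ * x₂) - x₂ * x₃ - x₃ * x₁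
        + (max 0 (x₁ - 1)) ^ 2 + (max 0 (-x₁ - 1)) ^ 2
        + (max 0 (x₂ - 1)) ^ 2 + (max 0 (-x₂ - 1)) ^ 2
        + (max 0 (x₃ - 1)) ^ 2 + (max 0 (-x₃ - 1)) ^ 2)
    (x₂ x₃ : ℝ) :
    (0 < x₂ + x₃ →
      (∀ y : ℝ, f (1 + (x₂ + x₃) / 2) x₂ x₃ ≤ f y x₂ x₃) ∧
      (∀ y : ℝ, f y x₂ x₃ = f (1 + (x₂ + x₃) / 2) x₂ x₃ → y = 1 + (x₂ + x₃) / 2)) ∧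
    (x₂ + x₃ = 0 →
      ∀ y ∈ Set.Icc (-1 : ℝ) 1, ∀ x : ℝ, f y x₂ x₃ ≤ f x x₂ x₃) := by
  constructor
  · intro hs
    have e1 : max 0 (1 + (x₂ + x₃) / 2 - 1) = (x₂ + x₃) / 2 := by
      rw [show (1 + (x₂ + x₃) / 2 - 1) = (x₂ + x₃) / 2 by ring]
      exact max_eq_right (by linarith)
    have e2 : max 0 (-(1 + (x₂ + x₃) / 2) - 1) = 0 := max_eq_left (by linarith)
    constructor
    · intro y
      obtain ⟨hm0, hm1, hmc⟩ := max_facts (y - 1)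
      obtain ⟨hn0, hn1, hnc⟩ := max_facts (-y - 1)
      rw [hf, hf, e1, e2]
      nlinarith [sq_nonneg (max 0 (y - 1) - (x₂ + x₃) / 2), sq_nonneg (max 0 (-y - 1)),
        mul_nonneg hs.le (sub_nonneg.mpr hm1)]
    · intro y hy
      obtain ⟨hm0, hm1, hmc⟩ := max_facts (y - 1)
      obtain ⟨hn0, hn1, hnc⟩ := max_facts (-y - 1)
      rw [hf, hf, e1, e2] at hy
      have key : (max 0 (y - 1) - (x₂ + x₃) / 2) ^ 2
          + (x₂ + x₃) * (max 0 (y - 1) - (y - 1)) + (max 0 (-y - 1)) ^ 2 = 0 := by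
        linear_combination hy
      have t2 : (x₂ + x₃) * (max 0 (y - 1) - (y - 1)) = 0 := by
        nlinarith [sq_nonneg (max 0 (y - 1) - (x₂ + x₃) / 2), sq_nonneg (max 0 (-y - 1)),
          mul_nonneg hs.le (sub_nonneg.mpr hm1)]
      have hm : max 0 (y - 1) = y - 1 := by
        have := mul_eq_zero.mp t2
        rcases this with h | h
        · linarith
        · linarith
      have t1 : (max 0 (y - 1) - (x₂ + x₃) / 2) ^ 2 = 0 := by
        nlinarith [sq_nonneg (max 0 (-y - 1))]
      have h0 : max 0 (y - 1) - (x₂ + x₃) / 2 = 0 := sq_eq_zero_iff.mp t1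
      rw [hm] at h0
      linarith
  · intro hs y hy x
    obtain ⟨hy1, hy2⟩ := hy
    have e1 : max 0 (y - 1) = 0 := max_eq_left (by linarith)
    have e2 : max 0 (-y - 1) = 0 := max_eq_left (by linarith)
    obtain ⟨hm0, hm1, hmc⟩ := max_facts (x - 1)
    obtain ⟨hn0, hn1, hnc⟩ := max_facts (-x - 1)
    rw [hf, hf, e1, e2]
    nlinarith [sq_nonneg (max 0 (x - 1)), sq_nonneg (max 0 (-x - 1))]
end

section
/- The multiplicative NMF majorization matrix dominates the Hessian: for W ∈ ℝ^{M×K} with all positive entries and h ∈ ℝ^K with all positive entries, the diagonal matrix Φ with Φ_{jj} = [WᵀW h]_j / h_j satisfies Φ ⪰ WᵀW (i.e., Φ - WᵀW is positive semidefinite). -/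
/-! Symmetrising the quadratic form of `Φ - A` over the pairs `(j, k)` gives
`2 vᵀ(Φ - A)v = ∑ⱼ ∑ₖ Aⱼₖ (hₖ vⱼ - hⱼ vₖ)² / (hⱼ hₖ)`, which is a sum of nonnegative terms as soon
as the symmetric matrix `A = WᵀW` has nonnegative entries. -/

open Matrix Finset

namespace Matrix

variable {n : Type*} [Fintype n] [DecidableEq n] {A : Matrix n n ℝ} {h : n → ℝ}

theorem two_mul_dotProduct_diagonal_div_sub_mulVec (hA : A.IsSymm) (hh : ∀ j, h j ≠ 0)
    (v : n → ℝ) :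
    2 * (v ⬝ᵥ (diagonal (fun j => (A *ᵥ h) j / h j) - A) *ᵥ v)
      = ∑ j, ∑ k, A j k * (h k * v j - h j * v k) ^ 2 / (h j * h k) := by
  have diag_term : v ⬝ᵥ diagonal (fun j => (A *ᵥ h) j / h j) *ᵥ v
      = ∑ j, ∑ k, A j k * h k * v j ^ 2 / h j := by
    simp only [dotProduct, mulVec_diagonal]
    simp only [mulVec, dotProduct, sum_div, sum_mul, mul_sum]
    exact sum_congr rfl fun j _ => sum_congr rfl fun k _ => by ring
  have diag_term_swap : ∑ j, ∑ k, A j k * h k * v j ^ 2 / h j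
      = ∑ j, ∑ k, A j k * h j * v k ^ 2 / h k := by
    rw [sum_comm]
    simp only [hA.apply]
  have off_term : v ⬝ᵥ A *ᵥ v = ∑ j, ∑ k, A j k * v j * v k := by
    simp only [dotProduct, mulVec, mul_sum]
    exact sum_congr rfl fun j _ => sum_congr rfl fun k _ => by ring
  have expand (j k : n) : A j k * (h k * v j - h j * v k) ^ 2 / (h j * h k)
      = A j k * h k * v j ^ 2 / h j + A j k * h j * v k ^ 2 / h k
        - 2 * (A j k * v j * v k) := by
    field_simp [hh j, hh k]
    ring
  rw [sub_mulVec, dotProduct_sub, diag_term, off_term]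
  simp only [expand, sum_add_distrib, sum_sub_distrib, ← mul_sum]
  linarith

theorem posSemidef_diagonal_div_sub (hA : A.IsSymm) (hA₀ : ∀ j k, 0 ≤ A j k)
    (hh : ∀ j, 0 < h j) :
    (diagonal (fun j => (A *ᵥ h) j / h j) - A).PosSemidef := by
  refine posSemidef_iff_dotProduct_mulVec.mpr
    ⟨(isHermitian_diagonal _).sub (isHermitian_iff_isSymm.mpr hA), fun v => ?_⟩
  have hsum : 0 ≤ ∑ j, ∑ k, A j k * (h k * v j - h j * v k) ^ 2 / (h j * h k) :=
    sum_nonneg fun j _ => sum_nonneg fun k _ => by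
      have := hA₀ j k; have := hh j; have := hh k; positivity
  rw [star_trivial]
  linarith [two_mul_dotProduct_diagonal_div_sub_mulVec hA (fun j => (hh j).ne') v]

end Matrix

/-- Multiplicative NMF majorization: for W with positive entries and h > 0, the
diagonal matrix Φ with Φ_jj = [WᵀWh]_j / h_j satisfies Φ ⪰ WᵀW. -/
theorem stmt_15 {M K : ℕ}
    (W : Matrix (Fin M) (Fin K) ℝ) (hW : ∀ i j, 0 < W i j)
    (h : Fin K → ℝ) (hh : ∀ j, 0 < h j) :
    (Matrix.diagonal (fun j => (Wᵀ * W).mulVec h j / h j) - Wᵀ * W).PosSemidef := by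
  have gram_symm : (Wᵀ * W).IsSymm := by simp [IsSymm, transpose_mul]
  have gram_nonneg (j k : Fin K) : 0 ≤ (Wᵀ * W) j k := by
    rw [mul_apply]
    exact sum_nonneg fun i _ => (mul_pos (hW i j) (hW i k)).le
  exact posSemidef_diagonal_div_sub gram_symm gram_nonneg hh
end

section
/- For separable nonsmooth structure, coordinatewise minima are stationary: let f(x₁,x₂) = g(x₁,x₂) + h₁(x₁) + h₂(x₂) where g : ℝ^{m₁}×ℝ^{m₂} → ℝ is differentiable and h₁, h₂ are convex. If x̂ is a coordinatewise minimum (f does not decrease along any single-block feasible direction, blocks optimized over ℝ^{m_i}), then x̂ is a stationary point: f'(x̂; d) ≥ 0 for every direction d = (d₁, d₂). -/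
open Filter

/-- One-sided directional derivative (as a liminf as λ ↓ 0). -/
noncomputable def dirDeriv {E : Type*} [AddCommGroup E] [Module ℝ E]
    (f : E → ℝ) (x d : E) : ℝ :=
  Filter.liminf (fun t : ℝ => (f (x + t • d) - f x) / t) (nhdsWithin 0 (Set.Ioi 0))

/-- For separable nonsmooth structure f = g + h₁ + h₂ with g differentiable and
h₁, h₂ convex, any coordinatewise minimum x̂ is a stationary point:
f'(x̂; d) ≥ 0 for every direction d. -/
theorem stmt_19 {m₁ m₂ : ℕ}
    (g : (Fin m₁ → ℝ) × (Fin m₂ → ℝ) → ℝ) (hg : Differentiable ℝ g)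
    (h₁ : (Fin m₁ → ℝ) → ℝ) (hh₁ : ConvexOn ℝ Set.univ h₁)
    (h₂ : (Fin m₂ → ℝ) → ℝ) (hh₂ : ConvexOn ℝ Set.univ h₂)
    (f : (Fin m₁ → ℝ) × (Fin m₂ → ℝ) → ℝ)
    (hf : ∀ x, f x = g x + h₁ x.1 + h₂ x.2)
    (x : (Fin m₁ → ℝ) × (Fin m₂ → ℝ))
    (hcw₁ : ∀ d₁ : Fin m₁ → ℝ, f (x + (d₁, 0)) ≥ f x)
    (hcw₂ : ∀ d₂ : Fin m₂ → ℝ, f (x + (0, d₂)) ≥ f x) :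
    ∀ d : (Fin m₁ → ℝ) × (Fin m₂ → ℝ), 0 ≤ dirDeriv f x d := by
  intro d
  set L := fderiv ℝ g x with hL
  -- the g-quotient in any direction v tends to L v
  have key : ∀ v : (Fin m₁ → ℝ) × (Fin m₂ → ℝ),
      Tendsto (fun t : ℝ => (g (x + t • v) - g x) / t)
        (nhdsWithin 0 (Set.Ioi 0)) (nhds (L v)) := by
    intro v
    have hline : HasDerivAt (fun t : ℝ => g (x + t • v)) (L v) 0 :=
      ((hg x).hasFDerivAt.hasLineDerivAt v)
    have := hasDerivAt_iff_tendsto_slope.mp hline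
    have hmono : nhdsWithin (0:ℝ) (Set.Ioi 0) ≤ nhdsWithin 0 {(0:ℝ)}ᶜ :=
      nhdsWithin_mono 0 (fun t ht => ne_of_gt ht)
    have := this.mono_left hmono
    refine this.congr (fun t => ?_)
    simp [slope_def_field, div_eq_inv_mul]
  -- the comparison function
  set r : ℝ → ℝ := fun t =>
    (g (x + t • d) - g x) / t - (g (x + t • ((d.1, 0) : _)) - g x) / t
      - (g (x + t • ((0, d.2) : _)) - g x) / t with hr
  have hrt : Tendsto r (nhdsWithin 0 (Set.Ioi 0)) (nhds 0) := by
    have := ((key d).sub (key (d.1, 0))).sub (key (0, d.2))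
    have hzero : L d - L (d.1, 0) - L (0, d.2) = 0 := by
      have hd : L d = L (d.1, 0) + L (0, d.2) := by
        rw [← map_add]
        congr 1
        ext <;> simp
      rw [hd]; ring
    rwa [hzero] at this
  -- eventual inequality r t ≤ q t
  have hev : ∀ᶠ t in nhdsWithin (0:ℝ) (Set.Ioi 0),
      r t ≤ (f (x + t • d) - f x) / t := by
    filter_upwards [self_mem_nhdsWithin] with t ht
    have htpos : (0:ℝ) < t := ht
    have e1 := hcw₁ (t • d.1)
    have e2 := hcw₂ (t • d.2)
    have hx1 : x + ((t • d.1 : Fin m₁ → ℝ), (0 : Fin m₂ → ℝ)) = x + t • ((d.1, 0) : _) := by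
      ext <;> simp
    have hx2 : x + ((0 : Fin m₁ → ℝ), (t • d.2 : Fin m₂ → ℝ)) = x + t • ((0, d.2) : _) := by
      ext <;> simp
    rw [hx1] at e1
    rw [hx2] at e2
    rw [hf, hf] at e1 e2 ⊢
    simp only [Prod.fst_add, Prod.snd_add, Prod.smul_fst, Prod.smul_snd, smul_zero,
      add_zero] at e1 e2 ⊢
    show (g (x + t • d) - g x) / t - (g (x + t • ((d.1, 0) : _)) - g x) / t
        - (g (x + t • ((0, d.2) : _)) - g x) / t ≤ _
    rw [div_sub_div_same, div_sub_div_same, div_le_div_iff_of_pos_right htpos]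
    linarith
  -- liminf comparison
  have hrb : IsBoundedUnder (· ≥ ·) (nhdsWithin (0:ℝ) (Set.Ioi 0)) r :=
    hrt.isBoundedUnder_ge
  obtain ⟨c, hc⟩ := hrt.isBoundedUnder_ge
  have hqb : IsBoundedUnder (· ≥ ·) (nhdsWithin (0:ℝ) (Set.Ioi 0))
      (fun t => (f (x + t • d) - f x) / t) := by
    refine ⟨c, ?_⟩
    simp only [eventually_map] at hc ⊢
    filter_upwards [hc, hev] with t h1 h2
    exact le_trans h1 h2
  -- the quotient is eventually bounded above (uses convexity), hence cobounded
  have hub : ∀ᶠ t in nhdsWithin (0:ℝ) (Set.Ioi 0),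
      (f (x + t • d) - f x) / t ≤
        (L d + 1) + (h₁ (x.1 + d.1) - h₁ x.1) + (h₂ (x.2 + d.2) - h₂ x.2) := by
    have h1 : ∀ᶠ t : ℝ in nhdsWithin 0 (Set.Ioi 0), t < 1 :=
      ((eventually_lt_nhds one_pos).filter_mono nhdsWithin_le_nhds)
    have h2 : ∀ᶠ t : ℝ in nhdsWithin 0 (Set.Ioi 0),
        (g (x + t • d) - g x) / t ≤ L d + 1 :=
      (key d).eventually (eventually_le_nhds (lt_add_one _))
    filter_upwards [self_mem_nhdsWithin, h1, h2] with t ht ht1 hgq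
    have htpos : (0:ℝ) < t := ht
    have c1 : (h₁ (x.1 + t • d.1) - h₁ x.1) / t ≤ h₁ (x.1 + d.1) - h₁ x.1 := by
      have hcx := hh₁.2 (Set.mem_univ x.1) (Set.mem_univ (x.1 + d.1))
        (by linarith : (0:ℝ) ≤ 1 - t) htpos.le (by ring)
      have heq : (1 - t) • x.1 + t • (x.1 + d.1) = x.1 + t • d.1 := by
        module
      rw [heq] at hcx
      simp only [smul_eq_mul] at hcx
      rw [div_le_iff₀ htpos]
      nlinarith [hcx]
    have c2 : (h₂ (x.2 + t • d.2) - h₂ x.2) / t ≤ h₂ (x.2 + d.2) - h₂ x.2 := by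
      have hcx := hh₂.2 (Set.mem_univ x.2) (Set.mem_univ (x.2 + d.2))
        (by linarith : (0:ℝ) ≤ 1 - t) htpos.le (by ring)
      have heq : (1 - t) • x.2 + t • (x.2 + d.2) = x.2 + t • d.2 := by
        module
      rw [heq] at hcx
      simp only [smul_eq_mul] at hcx
      rw [div_le_iff₀ htpos]
      nlinarith [hcx]
    have hsplit : (f (x + t • d) - f x) / t
        = (g (x + t • d) - g x) / t + (h₁ (x.1 + t • d.1) - h₁ x.1) / t
          + (h₂ (x.2 + t • d.2) - h₂ x.2) / t := by
      rw [hf, hf]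
      simp only [Prod.fst_add, Prod.snd_add, Prod.smul_fst, Prod.smul_snd]
      ring
    rw [hsplit]
    linarith
  have hco : IsCoboundedUnder (· ≥ ·) (nhdsWithin (0:ℝ) (Set.Ioi 0))
      (fun t => (f (x + t • d) - f x) / t) :=
    isCoboundedUnder_ge_of_eventually_le _ hub
  have hle : liminf r (nhdsWithin (0:ℝ) (Set.Ioi 0))
      ≤ liminf (fun t => (f (x + t • d) - f x) / t) (nhdsWithin (0:ℝ) (Set.Ioi 0)) :=
    liminf_le_liminf hev hrb hco
  rw [hrt.liminf_eq] at hle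
  exact hle
end
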